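/- arXiv:2208.07850 — 10 statements merged into one kernel-verified Lean document; each statement's English description precedes it below -/
import Mathlib

section
/- For every integer k ≥ 0, there are no integers x, y, z satisfying 22 + 8k = (62 + 8k)·x² + 2x + y² + z². -/
lemma no_six_mod8 : ∀ a b : ZMod 8, a ^ 2 + b ^ 2 ≠ 6 := by decide

theorem stmt_2 (k : ℤ) (hk : 0 ≤ k) :
    ¬ ∃ x y z : ℤ, 22 + 8 * k = (62 + 8 * k) * x ^ 2 + 2 * x + y ^ 2 + z ^ 2 := by
  rintro ⟨x, y, z, h⟩
  rcases eq_or_ne x 0 with hx | hx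
  · subst hx
    have h8 := congrArg (Int.cast : ℤ → ZMod 8) h
    push_cast at h8
    simp only [show ((8 : ZMod 8)) = 0 by decide] at h8
    have h6 : ((y : ZMod 8)) ^ 2 + ((z : ZMod 8)) ^ 2 = 6 := by
      simp at h8; rw [← h8]; decide
    exact no_six_mod8 _ _ h6
  · have hx1 : 1 ≤ x ^ 2 := by rcases lt_or_gt_of_ne hx with h'|h' <;> nlinarith
    nlinarith [sq_nonneg y, sq_nonneg z, sq_nonneg (x + 1), sq_nonneg (x - 1),
      mul_nonneg hk (sq_nonneg x), mul_nonneg hk (sub_nonneg.2 hx1)]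
end

section
/- The congruence x² + (x+1)² + z² ≡ 18 (mod 25) has no integer solutions x, z. -/
theorem stmt_4 : ¬ ∃ x z : ℤ, x ^ 2 + (x + 1) ^ 2 + z ^ 2 ≡ 18 [ZMOD 25] := by
  rintro ⟨x, z, h⟩
  have h' := (ZMod.intCast_eq_intCast_iff _ _ 25).mpr h
  push_cast at h'
  revert h'
  generalize (x : ZMod 25) = a
  generalize (z : ZMod 25) = b
  revert a b
  decide
end

section
/- The congruence x² + (3x+1)² + y² ≡ 13 (mod 9) has no integer solutions x, y, and likewise x² + (3x−1)² + y² ≡ 13 (mod 9) has no integer solutions. -/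
theorem stmt_5 :
    (¬ ∃ x y : ℤ, x ^ 2 + (3 * x + 1) ^ 2 + y ^ 2 ≡ 13 [ZMOD 9]) ∧
    (¬ ∃ x y : ℤ, x ^ 2 + (3 * x - 1) ^ 2 + y ^ 2 ≡ 13 [ZMOD 9]) := by
  constructor <;> rintro ⟨x, y, h⟩ <;>
  · replace h := (ZMod.intCast_eq_intCast_iff _ _ 9).mpr h
    push_cast at h
    revert h
    generalize (x : ZMod 9) = a
    generalize (y : ZMod 9) = b
    revert a b
    decide
end

section
/- Let m be an integer with m > 1 that is not a perfect square. Then there are no integers x, y with m = m·x² + 2x + y². -/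
theorem stmt_6 (m : ℤ) (hm : 1 < m) (hsq : ¬ ∃ y : ℤ, m = y ^ 2) :
    ¬ ∃ x y : ℤ, m = m * x ^ 2 + 2 * x + y ^ 2 := by
  rintro ⟨x, y, h⟩
  have hy : y ^ 2 = m * (1 - x ^ 2) - 2 * x := by ring_nf; linarith
  have hx : x = 0 ∨ x = -1 := by
    rcases lt_trichotomy x (-1) with hlt | heq | hgt
    · exfalso
      have h1 : x ≤ -2 := by omega
      nlinarith [sq_nonneg y, sq_nonneg (x + 1)]
    · right; exact heq
    · rcases lt_trichotomy x 0 with h0 | h0 | h0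
      · omega
      · left; exact h0
      · exfalso
        have h1 : 1 ≤ x := by omega
        nlinarith [sq_nonneg y, sq_nonneg (x - 1)]
  rcases hx with rfl | rfl
  · exact hsq ⟨y, by linarith [hy]⟩
  · have : y ^ 2 = 2 := by linarith [hy]
    have hyb1 : -2 ≤ y := by nlinarith
    have hyb2 : y ≤ 2 := by nlinarith
    interval_cases y <;> omega
end

section
/- Let m > 2 be an even integer such that neither m nor m + 10 is a perfect square. Then there are no integers x, y with m + 10 = m·x² + 2x + y². -/
theorem stmt_8 (m : ℤ) (hm : 2 < m) (hme : Even m)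
    (hsq1 : ¬ ∃ y : ℤ, m = y ^ 2) (hsq2 : ¬ ∃ y : ℤ, m + 10 = y ^ 2) :
    ¬ ∃ x y : ℤ, m + 10 = m * x ^ 2 + 2 * x + y ^ 2 := by
  obtain ⟨k, hk⟩ := hme
  have hm4 : 4 ≤ m := by omega
  rintro ⟨x, y, h⟩
  have hx2 : x = 0 ∨ x = 1 ∨ x = -1 ∨ x = 2 ∨ x = -2 ∨ 3 ≤ x ∨ x ≤ -3 := by omega
  rcases hx2 with rfl | rfl | rfl | rfl | rfl | hx | hx
  · exact hsq2 ⟨y, by linarith [h]⟩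
  · have hy : y ^ 2 = 8 := by nlinarith [h]
    have h1 : y ≤ 2 := by nlinarith
    have h2 : -2 ≤ y := by nlinarith
    interval_cases y <;> omega
  · have hy : y ^ 2 = 12 := by nlinarith [h]
    have h1 : y ≤ 3 := by nlinarith
    have h2 : -3 ≤ y := by nlinarith
    interval_cases y <;> omega
  · nlinarith [sq_nonneg y]
  · have hy : y ^ 2 = 14 - 3 * m := by nlinarith [h]
    have hm' : m = 4 := by nlinarith [sq_nonneg y]
    subst hm'
    have h1 : y ≤ 1 := by nlinarith
    have h2 : -1 ≤ y := by nlinarith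
    interval_cases y <;> omega
  · have h9 : 9 ≤ x ^ 2 := by nlinarith
    nlinarith [sq_nonneg y, mul_nonneg (by linarith : (0:ℤ) ≤ m - 4) (by linarith : (0:ℤ) ≤ x ^ 2 - 1)]
  · have h9 : 9 ≤ x ^ 2 := by nlinarith
    nlinarith [sq_nonneg y, mul_nonneg (by linarith : (0:ℤ) ≤ m - 4) (by linarith : (0:ℤ) ≤ x ^ 2 - 1)]
end

section
/- For every integer k ≥ 0 such that 13 + 4k is not a perfect square, there are no integers x, y with 13 + 4k = (8 + 4k)·x² + 2x + y². -/
theorem stmt_10 (k : ℤ) (hk : 0 ≤ k) (hsq : ¬ ∃ y : ℤ, 13 + 4 * k = y ^ 2) :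
    ¬ ∃ x y : ℤ, 13 + 4 * k = (8 + 4 * k) * x ^ 2 + 2 * x + y ^ 2 := by
  rintro ⟨x, y, h⟩
  have h1 : (7 + 4 * k) * x ^ 2 ≤ 14 + 4 * k := by
    nlinarith [sq_nonneg y, sq_nonneg (x + 1)]
  have h2 : x ^ 2 ≤ 3 := by
    by_contra hc
    push_neg at hc
    nlinarith [mul_nonneg hk (by nlinarith : (0:ℤ) ≤ x ^ 2 - 3)]
  have hxl : -1 ≤ x := by nlinarith [sq_nonneg (x + 2)]
  have hxu : x ≤ 1 := by nlinarith [sq_nonneg (x - 2)]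
  interval_cases x
  · have hy : y ^ 2 = 7 := by linarith
    have hbl : -3 ≤ y := by nlinarith
    have hbu : y ≤ 3 := by nlinarith
    interval_cases y <;> omega
  · exact hsq ⟨y, by linarith⟩
  · have hy : y ^ 2 = 3 := by linarith
    have hbl : -2 ≤ y := by nlinarith
    have hbu : y ≤ 2 := by nlinarith
    interval_cases y <;> omega
end

section
/- The set of residues of x² + x + 2y² + 2y modulo 25, as x and y range over all integers, is exactly the complement of {3, 8, 13, 23} in ℤ/25ℤ. -/
theorem stmt_14 :
    {a : ZMod 25 | ∃ x y : ℤ, ((x ^ 2 + x + 2 * y ^ 2 + 2 * y : ℤ) : ZMod 25) = a} =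
      ({3, 8, 13, 23} : Set (ZMod 25))ᶜ := by
  have h : ∀ a : ZMod 25,
      (∃ x y : ℤ, ((x ^ 2 + x + 2 * y ^ 2 + 2 * y : ℤ) : ZMod 25) = a) ↔
      (∃ x y : ZMod 25, x ^ 2 + x + 2 * y ^ 2 + 2 * y = a) := by
    intro a
    constructor
    · rintro ⟨x, y, h⟩
      exact ⟨x, y, by push_cast at h; exact h⟩
    · rintro ⟨x, y, h⟩
      obtain ⟨x', rfl⟩ := ZMod.intCast_surjective x
      obtain ⟨y', rfl⟩ := ZMod.intCast_surjective y
      exact ⟨x', y', by push_cast; exact h⟩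
  ext a
  simp only [Set.mem_setOf_eq, h]
  revert a
  decide
end

section
/- Let t and j be integers with 1 < j < t, and suppose 2j ≢ x² + x + 2y² (mod t) for all integers x, y. Then for every integer k ≥ 0 there are no integers x, y with 4j + 4tk = 2x² + 2x + y². -/
theorem stmt_15 (t j : ℤ) (h1 : 1 < j) (h2 : j < t)
    (hyp : ∀ x y : ℤ, ¬ (2 * j ≡ x ^ 2 + x + 2 * y ^ 2 [ZMOD t])) :
    ∀ k : ℤ, 0 ≤ k → ¬ ∃ x y : ℤ, 4 * j + 4 * t * k = 2 * x ^ 2 + 2 * x + y ^ 2 := by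
  intro k hk ⟨x, y, he⟩
  have hxe : Even (x ^ 2 + x) := by
    have := Int.even_mul_succ_self x
    have hx : x * (x + 1) = x ^ 2 + x := by ring
    rwa [hx] at this
  obtain ⟨m, hm⟩ := hxe
  have hye : Even y := by
    have : Even (y ^ 2) := ⟨2 * j + 2 * t * k - (x ^ 2 + x), by linarith⟩
    exact (Int.even_pow.mp this).1
  obtain ⟨c, hc⟩ := hye
  have hy2 : y ^ 2 = 4 * c ^ 2 := by subst hc; ring
  apply hyp x c
  exact Int.modEq_iff_dvd.mpr ⟨2 * k, by linarith⟩
end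

section
/- Let t and j be integers with 1 < j < t, and suppose 2j ≢ x² + x + 2y² + 2y (mod t) for all integers x, y. Then for every integer k ≥ 0 there are no integers x, y with 1 + 4j + 4tk = 2x² + 2x + y². -/
theorem stmt_16 (t j : ℤ) (h1 : 1 < j) (h2 : j < t)
    (hyp : ∀ x y : ℤ, ¬ (2 * j ≡ x ^ 2 + x + 2 * y ^ 2 + 2 * y [ZMOD t])) :
    ∀ k : ℤ, 0 ≤ k → ¬ ∃ x y : ℤ, 1 + 4 * j + 4 * t * k = 2 * x ^ 2 + 2 * x + y ^ 2 := by
  intro k hk ⟨x, y, h⟩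
  obtain ⟨n, hn⟩ := Int.even_mul_succ_self x
  have hxx : 2 * x ^ 2 + 2 * x = 4 * n := by
    have : x ^ 2 + x = n + n := by rw [← hn]; ring
    linarith
  have hy : Odd y := by
    rcases Int.even_or_odd y with ⟨m, hm⟩ | ho
    · exfalso
      have hysq : y ^ 2 = 4 * (m * m) := by rw [hm]; ring
      have h1' : (1 : ℤ) = 4 * (n + m * m - j - t * k) := by
        rw [hysq, hxx] at h; linarith
      have : (4 : ℤ) ∣ 1 := ⟨_, h1'⟩
      norm_num at this
    · exact ho
  obtain ⟨y', hy'⟩ := hy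
  apply hyp x y'
  have key : x ^ 2 + x + 2 * y' ^ 2 + 2 * y' = 2 * j + 2 * t * k := by
    rw [hy'] at h
    have h2' : 2 * (x ^ 2 + x + 2 * y' ^ 2 + 2 * y') = 2 * (2 * j + 2 * t * k) := by
      ring_nf; ring_nf at h; linarith
    exact mul_left_cancel₀ (by norm_num : (2:ℤ) ≠ 0) h2'
  rw [key]
  have : (2 * j + 2 * t * k) ≡ 2 * j [ZMOD t] := by
    apply Int.modEq_iff_dvd.mpr
    exact ⟨-(2 * k), by ring⟩
  exact this.symm
end

section
/- For all integers m > 1 and t ≥ 1 with 2 < m·t² − 2t, there are no integers x, y with 2 = m·x² + 2x + y² and |x| ≥ t; in particular, if m ≥ 5 then the equation 2 = m·x² + 2x + y² has no integer solutions. -/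
theorem stmt_19 :
    (∀ m t : ℤ, 1 < m → 1 ≤ t → 2 < m * t ^ 2 - 2 * t →
      ¬ ∃ x y : ℤ, 2 = m * x ^ 2 + 2 * x + y ^ 2 ∧ t ≤ |x|) ∧
    (∀ m : ℤ, 5 ≤ m → ¬ ∃ x y : ℤ, 2 = m * x ^ 2 + 2 * x + y ^ 2) := by
  have main : ∀ m t : ℤ, 1 < m → 1 ≤ t → 2 < m * t ^ 2 - 2 * t →
      ¬ ∃ x y : ℤ, 2 = m * x ^ 2 + 2 * x + y ^ 2 ∧ t ≤ |x| := by
    rintro m t hm ht hbig ⟨x, y, heq, hx⟩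
    have h1 : x ≤ |x| := le_abs_self x
    have h2 : -|x| ≤ x := neg_abs_le x
    have h3 : x ^ 2 = |x| ^ 2 := (sq_abs x).symm
    nlinarith [sq_nonneg y, mul_nonneg (sub_nonneg.mpr hx) (by linarith : (0:ℤ) ≤ |x| + t), mul_nonneg (by linarith : (0:ℤ) ≤ m - 1) (mul_nonneg (sub_nonneg.mpr hx) (by linarith : (0:ℤ) ≤ |x| + t))]
  refine ⟨main, fun m hm ⟨x, y, heq⟩ => ?_⟩
  rcases eq_or_ne x 0 with rfl | hx0
  · simp at heq
    have hy1 : y ≤ 1 := by nlinarith [sq_nonneg (y - 1)]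
    have hy2 : -1 ≤ y := by nlinarith [sq_nonneg (y + 1)]
    interval_cases y <;> simp at heq
  · exact main m 1 (by linarith) le_rfl (by linarith) ⟨x, y, heq, Int.one_le_abs hx0⟩
end
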